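/- arXiv:2602.21390 — 2 statements merged into one kernel-verified Lean document; each statement's English description precedes it below -/
import Mathlib

section
/- (Corollary 4.2, multiclass outcomes.) Let H₀ be a real Hilbert space, φ : X × ℝ^d → H₀ with ‖φ(x,p)‖² ≤ G for all x ∈ X and p ∈ Δ^d, where Δ^d := {p ∈ ℝ^d : p_j ≥ 0, Σ_j p_j = 1} is the probability simplex. Let Φ(x,p) : ℝ^d → H₀^d be θ ↦ (θ_1·φ(x,p), …, θ_d·φ(x,p)). Take Z = Δ^d, let y_1,…,y_T ∈ {1,…,d} be realized labels with targets z_t := the standard basis vector e_{y_t} ∈ ℝ^d, and suppose the EVI condition holds with tolerances ε_t ≤ G. Then for all h_1,…,h_d ∈ H₀, | Σ_{t=1}^T E_{p∼D_t}[ ⟨h_{y_t}, φ(x_t,p)⟩ − Σ_{j=1}^d p_j·⟨h_j, φ(x_t,p)⟩ ] | ≤ 4·( Σ_{j=1}^d ‖h_j‖ )·sqrt(T·G). -/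
/-!
Let `w_t := E_{p∼D_t}[Φ(x_t,p)(e_{y_t} − p)]` and `M_t := w_0 + ⋯ + w_{t-1}`. The EVI condition
tested at the vertex `z = e_{y_t}` of the simplex says exactly `⟪M_t, w_t⟫ ≤ ε_t ≤ G`, and
`‖w_t‖² ≤ ‖e_{y_t} − p‖² G ≤ 2G`. Hence `‖M_{t+1}‖² = ‖M_t‖² + 2⟪M_t, w_t⟫ + ‖w_t‖²` grows by
at most `4G` per step, so `‖M_T‖ ≤ 2 √(TG)`. The OI gap of `⟪h_y, φ(x,p)⟫` is `⟪(h_j)_j, M_T⟫`,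
and `‖(h_j)_j‖ ≤ ∑_j ‖h_j‖`.
-/

open scoped BigOperators RealInnerProductSpace

/-- A finitely supported probability distribution, given by finitely many
weighted atoms. -/
structure FinDist (α : Type*) where
  n : ℕ
  w : Fin n → ℝ
  pt : Fin n → α
  w_nonneg : ∀ i, 0 ≤ w i
  w_sum : ∑ i, w i = 1

namespace FinDist

noncomputable def exp {α V : Type*} [AddCommMonoid V] [Module ℝ V]
    (D : FinDist α) (f : α → V) : V :=
  ∑ i, D.w i • f (D.pt i)

def support {α : Type*} (D : FinDist α) : Set α :=
  {a | ∃ i, D.w i ≠ 0 ∧ D.pt i = a}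

end FinDist

namespace FinDist

variable {α : Type*}

lemma support_nonempty (D : FinDist α) : D.support.Nonempty := by
  by_contra hempty
  have hw : ∀ i, D.w i = 0 := fun i => by
    by_contra hi
    exact hempty ⟨D.pt i, i, hi, rfl⟩
  simpa [hw] using D.w_sum

lemma inner_exp {E : Type*} [NormedAddCommGroup E] [InnerProductSpace ℝ E]
    (D : FinDist α) (u : E) (f : α → E) :
    ⟪u, D.exp f⟫ = D.exp fun a => ⟪u, f a⟫ := by
  simp [exp, inner_sum, real_inner_smul_right]

variable {F : Type*} [SeminormedAddCommGroup F] [NormedSpace ℝ F]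

lemma norm_exp_le (D : FinDist α) (f : α → F) {C : ℝ}
    (hf : ∀ a ∈ D.support, ‖f a‖ ≤ C) : ‖D.exp f‖ ≤ C :=
  calc ‖D.exp f‖ ≤ ∑ i, D.w i * ‖f (D.pt i)‖ := by
        refine (norm_sum_le _ _).trans_eq (Finset.sum_congr rfl fun i _ => ?_)
        rw [norm_smul, Real.norm_of_nonneg (D.w_nonneg i)]
    _ ≤ ∑ i, D.w i * C := Finset.sum_le_sum fun i _ => by
        rcases eq_or_ne (D.w i) 0 with h0 | h0
        · simp [h0]
        · exact mul_le_mul_of_nonneg_left (hf _ ⟨i, h0, rfl⟩) (D.w_nonneg i)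
    _ = C := by rw [← Finset.sum_mul, D.w_sum, one_mul]

lemma norm_exp_sq_le (D : FinDist α) (f : α → F) {C : ℝ}
    (hf : ∀ a ∈ D.support, ‖f a‖ ^ 2 ≤ C) : ‖D.exp f‖ ^ 2 ≤ C := by
  obtain ⟨a, ha⟩ := D.support_nonempty
  have hC : 0 ≤ C := (sq_nonneg _).trans (hf a ha)
  exact (Real.le_sqrt (norm_nonneg _) hC).1
    (D.norm_exp_le f fun a ha => Real.le_sqrt_of_sq_le (hf a ha))

end FinDist

lemma norm_sum_range_sq_le_of_inner_le {E : Type*} [NormedAddCommGroup E]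
    [InnerProductSpace ℝ E] {w : ℕ → E} {T : ℕ} {a b : ℝ}
    (hinner : ∀ t < T, ⟪∑ τ ∈ Finset.range t, w τ, w t⟫ ≤ a)
    (hnorm : ∀ t < T, ‖w t‖ ^ 2 ≤ b) :
    ‖∑ t ∈ Finset.range T, w t‖ ^ 2 ≤ T * (2 * a + b) := by
  induction T with
  | zero => simp
  | succ T ih =>
    have hprev := ih (fun t ht => hinner t (by omega)) (fun t ht => hnorm t (by omega))
    have hT_inner := hinner T T.lt_succ_self
    have hT_norm := hnorm T T.lt_succ_self
    rw [Finset.sum_range_succ, norm_add_sq_real]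
    push_cast
    linarith

lemma norm_toLp_le_sum_norm {ι H : Type*} [Fintype ι] [SeminormedAddCommGroup H] (h : ι → H) :
    ‖WithLp.toLp 2 h‖ ≤ ∑ j, ‖h j‖ := by
  have hsq : ‖WithLp.toLp 2 h‖ ^ 2 ≤ (∑ j, ‖h j‖) ^ 2 := by
    rw [PiLp.norm_sq_eq_of_L2]
    exact Finset.sum_sq_le_sq_sum_of_nonneg fun j _ => norm_nonneg _
  exact (pow_le_pow_iff_left₀ (norm_nonneg _)
    (Finset.sum_nonneg fun j _ => norm_nonneg _) two_ne_zero).1 hsq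

section Multiclass

variable {ι : Type*} [Fintype ι] {H : Type*} [NormedAddCommGroup H] [InnerProductSpace ℝ H]

def probSimplex (ι : Type*) [Fintype ι] : Set (EuclideanSpace ℝ ι) :=
  {p | (∀ j, 0 ≤ p j) ∧ ∑ j, p j = 1}

lemma single_mem_probSimplex [DecidableEq ι] (k : ι) :
    EuclideanSpace.single k (1 : ℝ) ∈ probSimplex ι := by
  refine ⟨fun j => ?_, by simp⟩
  rw [PiLp.single_apply]
  split_ifs <;> norm_num

lemma norm_single_sub_sq_le_two [DecidableEq ι] {p : EuclideanSpace ℝ ι}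
    (hp : p ∈ probSimplex ι) (k : ι) :
    ‖EuclideanSpace.single k (1 : ℝ) - p‖ ^ 2 ≤ 2 := by
  obtain ⟨hp0, hp1⟩ := hp
  have hp_sq : ‖p‖ ^ 2 ≤ 1 := by
    rw [EuclideanSpace.real_norm_sq_eq, ← hp1]
    refine Finset.sum_le_sum fun j _ => ?_
    have hpj : p j ≤ 1 := hp1 ▸ Finset.single_le_sum (fun i _ => hp0 i) (Finset.mem_univ j)
    nlinarith [hp0 j]
  rw [norm_sub_sq_real, EuclideanSpace.inner_single_left, PiLp.norm_single]
  simp only [map_one, one_mul, norm_one]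
  linarith [hp0 k]

/-- The paper's `Φ(x,p)θ = (θ_1 u, …, θ_d u) ∈ H₀^d` with `u = φ(x,p)`. -/
def featureLift (u : H) (θ : EuclideanSpace ℝ ι) : PiLp 2 (fun _ : ι => H) :=
  (WithLp.equiv 2 (∀ _ : ι, H)).symm fun j => θ j • u

lemma norm_featureLift_sq (u : H) (θ : EuclideanSpace ℝ ι) :
    ‖featureLift u θ‖ ^ 2 = ‖θ‖ ^ 2 * ‖u‖ ^ 2 := by
  simp [featureLift, PiLp.norm_sq_eq_of_L2, norm_smul, mul_pow, Finset.sum_mul]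

lemma inner_toLp_featureLift (h : ι → H) (u : H) (θ : EuclideanSpace ℝ ι) :
    ⟪WithLp.toLp 2 h, featureLift u θ⟫ = ∑ j, θ j * ⟪h j, u⟫ := by
  simp [featureLift, PiLp.inner_apply, real_inner_smul_right]

lemma inner_toLp_featureLift_single_sub [DecidableEq ι] (h : ι → H) (u : H) (k : ι)
    (p : EuclideanSpace ℝ ι) :
    ⟪WithLp.toLp 2 h, featureLift u (EuclideanSpace.single k 1 - p)⟫ =
      ⟪h k, u⟫ - ∑ j, p j * ⟪h j, u⟫ := by
  simp [inner_toLp_featureLift, sub_mul, Finset.sum_sub_distrib]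

end Multiclass

theorem stmt_4_general
    {H₀ : Type*} [NormedAddCommGroup H₀] [InnerProductSpace ℝ H₀]
    {X : Type*} {d : ℕ}
    (φ : X → EuclideanSpace ℝ (Fin d) → H₀)
    (G : ℝ)
    (hG : ∀ (x : X), ∀ p ∈ {p : EuclideanSpace ℝ (Fin d) |
        (∀ j, 0 ≤ p j) ∧ ∑ j, p j = 1}, ‖φ x p‖ ^ 2 ≤ G)
    (T : ℕ)
    (x : ℕ → X) (y : ℕ → Fin d)
    (D : ℕ → FinDist (EuclideanSpace ℝ (Fin d)))
    (hD : ∀ t < T, (D t).support ⊆ {p : EuclideanSpace ℝ (Fin d) |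
        (∀ j, 0 ≤ p j) ∧ ∑ j, p j = 1})
    (ε : ℕ → ℝ) (hεle : ∀ t < T, ε t ≤ G)
    (hEVI : ∀ t < T, ∀ z' ∈ {p : EuclideanSpace ℝ (Fin d) |
        (∀ j, 0 ≤ p j) ∧ ∑ j, p j = 1},
      (D t).exp (fun p =>
        (⟪(∑ τ ∈ Finset.range t, (D τ).exp (fun q =>
            (WithLp.equiv 2 (∀ _ : Fin d, H₀)).symm
              (fun j => ((EuclideanSpace.single (y τ) (1 : ℝ) - q) j) • φ (x τ) q))),
          (WithLp.equiv 2 (∀ _ : Fin d, H₀)).symm (fun j => ((z' - p) j) • φ (x t) p)⟫)) ≤ ε t)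
    (h : Fin d → H₀) :
    |∑ t ∈ Finset.range T, (D t).exp (fun p =>
        (⟪h (y t), φ (x t) p⟫ - ∑ j, p j * ⟪h j, φ (x t) p⟫))| ≤
      4 * (∑ j, ‖h j‖) * Real.sqrt ((T : ℝ) * G) := by
  set w : ℕ → PiLp 2 (fun _ : Fin d => H₀) := fun t =>
    (D t).exp fun p => featureLift (φ (x t) p) (EuclideanSpace.single (y t) 1 - p) with hw
  have hw_sq : ∀ t < T, ‖w t‖ ^ 2 ≤ 2 * G := fun t ht =>
    (D t).norm_exp_sq_le _ fun p hp => by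
      have hφ := hG (x t) p (hD t ht hp)
      have hθ := norm_single_sub_sq_le_two (hD t ht hp) (y t)
      rw [norm_featureLift_sq]
      nlinarith [sq_nonneg ‖φ (x t) p‖]
  have hinner : ∀ t < T, ⟪∑ τ ∈ Finset.range t, w τ, w t⟫ ≤ G := fun t ht => by
    rw [FinDist.inner_exp]
    exact (hEVI t ht _ (single_mem_probSimplex (y t))).trans (hεle t ht)
  have hM : ‖∑ t ∈ Finset.range T, w t‖ ≤ 2 * √(T * G) := by
    have := Real.le_sqrt_of_sq_le (norm_sum_range_sq_le_of_inner_le hinner hw_sq)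
    rwa [show (T : ℝ) * (2 * G + 2 * G) = 2 ^ 2 * (T * G) by ring,
      Real.sqrt_mul (by positivity), Real.sqrt_sq zero_le_two] at this
  have hgap : ∑ t ∈ Finset.range T, (D t).exp (fun p =>
      (⟪h (y t), φ (x t) p⟫ - ∑ j, p j * ⟪h j, φ (x t) p⟫)) =
        ⟪WithLp.toLp 2 h, ∑ t ∈ Finset.range T, w t⟫ := by
    simp only [inner_sum, hw, FinDist.inner_exp, inner_toLp_featureLift_single_sub]
  have hh := norm_toLp_le_sum_norm h
  rw [hgap]
  calc |⟪WithLp.toLp 2 h, ∑ t ∈ Finset.range T, w t⟫|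
      ≤ ‖WithLp.toLp 2 h‖ * ‖∑ t ∈ Finset.range T, w t‖ := abs_real_inner_le_norm _ _
    _ ≤ (∑ j, ‖h j‖) * (2 * √(T * G)) := by gcongr
    _ ≤ 4 * (∑ j, ‖h j‖) * √(T * G) := by
      nlinarith [Real.sqrt_nonneg (T * G), (norm_nonneg _).trans hh]

/-- Corollary 4.2, multiclass outcomes: with `Z` the probability
simplex, feature map `Φ(x,p)(θ) = (θ_1 φ(x,p), …, θ_d φ(x,p)) ∈ H₀^d`, targets
`e_{y_t}`, and EVI tolerances `ε_t ≤ G`, for all `h_1, …, h_d ∈ H₀` the OI gap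
of the distinguisher `f(x,p,y) = ⟪h_y, φ(x,p)⟫` is at most
`4 (∑_j ‖h_j‖) sqrt(T G)`. -/
theorem stmt_4
    {H₀ : Type*} [NormedAddCommGroup H₀] [InnerProductSpace ℝ H₀] [CompleteSpace H₀]
    {X : Type*} [Nonempty X] {d : ℕ} (hd : 1 ≤ d)
    (φ : X → EuclideanSpace ℝ (Fin d) → H₀)
    (G : ℝ)
    (hG : ∀ (x : X), ∀ p ∈ {p : EuclideanSpace ℝ (Fin d) |
        (∀ j, 0 ≤ p j) ∧ ∑ j, p j = 1}, ‖φ x p‖ ^ 2 ≤ G)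
    (T : ℕ) (hT : 1 ≤ T)
    (x : ℕ → X) (y : ℕ → Fin d)
    (D : ℕ → FinDist (EuclideanSpace ℝ (Fin d)))
    (hD : ∀ t < T, (D t).support ⊆ {p : EuclideanSpace ℝ (Fin d) |
        (∀ j, 0 ≤ p j) ∧ ∑ j, p j = 1})
    (ε : ℕ → ℝ) (hε : ∀ t < T, 0 ≤ ε t) (hεle : ∀ t < T, ε t ≤ G)
    (hEVI : ∀ t < T, ∀ z' ∈ {p : EuclideanSpace ℝ (Fin d) |
        (∀ j, 0 ≤ p j) ∧ ∑ j, p j = 1},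
      (D t).exp (fun p =>
        (⟪(∑ τ ∈ Finset.range t, (D τ).exp (fun q =>
            (WithLp.equiv 2 (∀ _ : Fin d, H₀)).symm
              (fun j => ((EuclideanSpace.single (y τ) (1 : ℝ) - q) j) • φ (x τ) q))),
          (WithLp.equiv 2 (∀ _ : Fin d, H₀)).symm (fun j => ((z' - p) j) • φ (x t) p)⟫)) ≤ ε t)
    (h : Fin d → H₀) :
    |∑ t ∈ Finset.range T, (D t).exp (fun p =>
        (⟪h (y t), φ (x t) p⟫ - ∑ j, p j * ⟪h j, φ (x t) p⟫))| ≤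
      4 * (∑ j, ‖h j‖) * Real.sqrt ((T : ℝ) * G) :=
  stmt_4_general φ G hG T x y D hD ε hεle hEVI h
end

section
/- (Corollary 4.7, indistinguishability of conditional expectations for vector-valued outcomes.) Let Y = Z be a nonempty subset of ℝ^d with ‖z − z′‖_2 ≤ D for all z, z′ ∈ Z, and suppose ‖Φ(x,p)‖_op² ≤ G for all x ∈ X, p ∈ Z. Let y_1,…,y_T ∈ Z be realized outcomes with targets z_t := y_t, and suppose the EVI condition holds with tolerances ε_t ≤ D²G/2. Then for every h ∈ H, | Σ_{t=1}^T E_{p∼D_t}[ ⟨h, Φ(x_t,p)(y_t − p)⟩_H ] | ≤ ‖h‖_H · sqrt( 2·T·D²·G ). (Equivalently, with generated distributions equal to the point mass at p, the distinguishers f(x,p,y) = ⟨h, Φ(x,p)(y)⟩_H have OIGap_T(f) bounded by this quantity.) -/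
/-!
Let `v t := E_{p∼D_t}[Φ(x_t,p)(y_t − p)]` and `M_t := v_0 + ⋯ + v_{t-1}`. The sum to be bounded is
`⟪h, M_T⟫`, so it suffices to bound `‖M_T‖`. Expanding
`‖M_{t+1}‖² = ‖M_t‖² + 2⟪M_t, v_t⟫ + ‖v_t‖²`, the EVI condition at the target `z = y_t` bounds
the cross term by `ε_t ≤ D²G/2`, and `‖v_t‖² ≤ G D²`; hence `‖M_T‖² ≤ 2 T D² G`.
-/

open scoped BigOperators RealInnerProductSpace

open Finset

namespace FinDist

variable {α : Type*}

lemma exp_inner {H : Type*} [SeminormedAddCommGroup H] [InnerProductSpace ℝ H]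
    (D : FinDist α) (h : H) (g : α → H) :
    D.exp (fun p => ⟪h, g p⟫) = ⟪h, D.exp g⟫ := by
  simp only [exp, inner_sum, real_inner_smul_right, smul_eq_mul]

lemma norm_exp_le_s7 {E : Type*} [SeminormedAddCommGroup E] [NormedSpace ℝ E]
    (D : FinDist α) {g : α → E} {B : ℝ} (hg : ∀ a ∈ D.support, ‖g a‖ ≤ B) :
    ‖D.exp g‖ ≤ B := by
  calc ‖D.exp g‖ ≤ ∑ i, ‖D.w i • g (D.pt i)‖ := norm_sum_le _ _
    _ ≤ ∑ i, D.w i * B := by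
        refine sum_le_sum fun i _ => ?_
        rw [norm_smul, Real.norm_of_nonneg (D.w_nonneg i)]
        rcases eq_or_ne (D.w i) 0 with hw | hw
        · simp [hw]
        · exact mul_le_mul_of_nonneg_left (hg _ ⟨i, hw, rfl⟩) (D.w_nonneg i)
    _ = B := by rw [← sum_mul, D.w_sum, one_mul]

end FinDist

section PartialSums

variable {H : Type*} [SeminormedAddCommGroup H] [InnerProductSpace ℝ H]

lemma norm_sum_range_sq (v : ℕ → H) (T : ℕ) :
    ‖∑ t ∈ range T, v t‖ ^ 2 =
      ∑ t ∈ range T, (2 * ⟪∑ τ ∈ range t, v τ, v t⟫ + ‖v t‖ ^ 2) := by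
  induction T with
  | zero => simp
  | succ T ih => rw [sum_range_succ, norm_add_sq_real, ih, sum_range_succ]; ring

lemma norm_sum_range_sq_le (v : ℕ → H) (T : ℕ) {c : ℝ}
    (hv : ∀ t < T, 2 * ⟪∑ τ ∈ range t, v τ, v t⟫ + ‖v t‖ ^ 2 ≤ c) :
    ‖∑ t ∈ range T, v t‖ ^ 2 ≤ T * c := by
  rw [norm_sum_range_sq]
  calc _ ≤ ∑ _t ∈ range T, c := sum_le_sum fun t ht => hv t (mem_range.mp ht)
    _ = T * c := by rw [sum_const, card_range, nsmul_eq_mul]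

end PartialSums

lemma norm_apply_le_sqrt_mul {E F : Type*} [SeminormedAddCommGroup E] [NormedSpace ℝ E]
    [SeminormedAddCommGroup F] [NormedSpace ℝ F] {L : E →L[ℝ] F} {u : E} {G r : ℝ}
    (hL : ‖L‖ ^ 2 ≤ G) (hu : ‖u‖ ≤ r) : ‖L u‖ ≤ √G * r := by
  have hL' : ‖L‖ ≤ √G := by simpa only [abs_norm] using Real.abs_le_sqrt hL
  calc ‖L u‖ ≤ ‖L‖ * ‖u‖ := L.le_opNorm u
    _ ≤ √G * r := mul_le_mul hL' hu (norm_nonneg u) (Real.sqrt_nonneg G)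

theorem stmt_7_general
    {H : Type*} [NormedAddCommGroup H] [InnerProductSpace ℝ H]
    {X : Type*} [Nonempty X] {d : ℕ}
    (Z : Set (EuclideanSpace ℝ (Fin d))) (hZ : Z.Nonempty)
    (Φ : X → EuclideanSpace ℝ (Fin d) → (EuclideanSpace ℝ (Fin d) →L[ℝ] H))
    (Dm G : ℝ)
    (hDiam : ∀ z ∈ Z, ∀ z' ∈ Z, ‖z - z'‖ ≤ Dm)
    (hG : ∀ (x : X), ∀ p ∈ Z, ‖Φ x p‖ ^ 2 ≤ G)
    (T : ℕ)
    (x : ℕ → X) (y : ℕ → EuclideanSpace ℝ (Fin d)) (hy : ∀ t < T, y t ∈ Z)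
    (D : ℕ → FinDist (EuclideanSpace ℝ (Fin d)))
    (hD : ∀ t < T, (D t).support ⊆ Z)
    (ε : ℕ → ℝ) (hεle : ∀ t < T, ε t ≤ Dm ^ 2 * G / 2)
    (hEVI : ∀ t < T, ∀ z' ∈ Z,
      (D t).exp (fun p =>
        (⟪(∑ τ ∈ Finset.range t, (D τ).exp (fun q => Φ (x τ) q (y τ - q))),
          Φ (x t) p (z' - p)⟫)) ≤ ε t)
    (h : H) :
    |∑ t ∈ Finset.range T, (D t).exp (fun p => (⟪h, Φ (x t) p (y t - p)⟫))| ≤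
      ‖h‖ * Real.sqrt (2 * (T : ℝ) * Dm ^ 2 * G) := by
  obtain ⟨p₀, hp₀⟩ := hZ
  have hG₀ : 0 ≤ G := (sq_nonneg _).trans (hG (Classical.arbitrary X) p₀ hp₀)
  set v : ℕ → H := fun t => (D t).exp fun q => Φ (x t) q (y t - q)
  have hv : ∀ t < T, ‖v t‖ ^ 2 ≤ G * Dm ^ 2 := fun t ht => by
    have : ‖v t‖ ≤ √G * Dm := (D t).norm_exp_le_s7 fun p hp =>
      norm_apply_le_sqrt_mul (hG _ p (hD t ht hp)) (hDiam _ (hy t ht) p (hD t ht hp))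
    calc ‖v t‖ ^ 2 ≤ (√G * Dm) ^ 2 := pow_le_pow_left₀ (norm_nonneg _) this 2
      _ = G * Dm ^ 2 := by rw [mul_pow, Real.sq_sqrt hG₀]
  have hstep : ∀ t < T, 2 * ⟪∑ τ ∈ range t, v τ, v t⟫ + ‖v t‖ ^ 2 ≤ 2 * Dm ^ 2 * G :=
    fun t ht => by
      have hcross := hEVI t ht (y t) (hy t ht)
      rw [FinDist.exp_inner] at hcross
      linarith [hv t ht, hεle t ht]
  have hM : ‖∑ t ∈ range T, v t‖ ≤ √(2 * T * Dm ^ 2 * G) := by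
    simpa only [abs_norm] using Real.abs_le_sqrt
      ((norm_sum_range_sq_le v T hstep).trans_eq (by ring))
  simp_rw [FinDist.exp_inner, ← inner_sum]
  calc |⟪h, ∑ t ∈ range T, v t⟫| ≤ ‖h‖ * ‖∑ t ∈ range T, v t‖ := abs_real_inner_le_norm _ _
    _ ≤ ‖h‖ * √(2 * T * Dm ^ 2 * G) := mul_le_mul_of_nonneg_left hM (norm_nonneg h)

/-- Corollary 4.7: indistinguishability of conditional
expectations for vector-valued outcomes.  With `Y = Z`, targets `z_t = y_t`,
and EVI tolerances `ε_t ≤ D²G/2`, for every `h ∈ H`: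
`|∑_t E_{p∼D_t} ⟪h, Φ(x_t,p)(y_t − p)⟫| ≤ ‖h‖ · sqrt(2·T·D²·G)`. -/
theorem stmt_7
    {H : Type*} [NormedAddCommGroup H] [InnerProductSpace ℝ H] [CompleteSpace H]
    {X : Type*} [Nonempty X] {d : ℕ} (hd : 1 ≤ d)
    (Z : Set (EuclideanSpace ℝ (Fin d))) (hZ : Z.Nonempty)
    (Φ : X → EuclideanSpace ℝ (Fin d) → (EuclideanSpace ℝ (Fin d) →L[ℝ] H))
    (Dm G : ℝ)
    (hDiam : ∀ z ∈ Z, ∀ z' ∈ Z, ‖z - z'‖ ≤ Dm)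
    (hG : ∀ (x : X), ∀ p ∈ Z, ‖Φ x p‖ ^ 2 ≤ G)
    (T : ℕ) (hT : 1 ≤ T)
    (x : ℕ → X) (y : ℕ → EuclideanSpace ℝ (Fin d)) (hy : ∀ t < T, y t ∈ Z)
    (D : ℕ → FinDist (EuclideanSpace ℝ (Fin d)))
    (hD : ∀ t < T, (D t).support ⊆ Z)
    (ε : ℕ → ℝ) (hε : ∀ t < T, 0 ≤ ε t) (hεle : ∀ t < T, ε t ≤ Dm ^ 2 * G / 2)
    (hEVI : ∀ t < T, ∀ z' ∈ Z,
      (D t).exp (fun p =>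
        (⟪(∑ τ ∈ Finset.range t, (D τ).exp (fun q => Φ (x τ) q (y τ - q))),
          Φ (x t) p (z' - p)⟫)) ≤ ε t)
    (h : H) :
    |∑ t ∈ Finset.range T, (D t).exp (fun p => (⟪h, Φ (x t) p (y t - p)⟫))| ≤
      ‖h‖ * Real.sqrt (2 * (T : ℝ) * Dm ^ 2 * G) :=
  stmt_7_general Z hZ Φ Dm G hDiam hG T x y hy D hD ε hεle hEVI h
end
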